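/- Fix δ > 0 and x₀ > 0. Let (x,y) be an admissible pair: y : [0,∞) → (0,∞) Lebesgue measurable and locally bounded, and x : [0,∞) → ℝ locally absolutely continuous with x(0) = x₀ and x'(t) = x(t)(1−x(t)) − y(t)x(t) for a.e. t ≥ 0. Assume t ↦ e^{−δt}(ln x(t)+ln y(t)) is integrable on every compact interval [0,T]. Then the function T ↦ ∫_0^T e^{−δt}( ln x(t) + ln y(t) ) dt has a limit as T → ∞ which is either a finite real number or −∞; i.e., either there exists L ∈ ℝ with ∫_0^T e^{−δt}(ln x + ln y) dt → L, or ∫_0^T e^{−δt}(ln x + ln y) dt → −∞ as T → ∞. -/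

import Mathlib

open MeasureTheory Filter

/-- An admissible pair for problem (P1): `y` is a measurable, locally bounded,
positive control, and `x` is the (locally absolutely continuous) trajectory of the
logistic-harvesting dynamics `x' = x(1−x) − y·x`, `x 0 = x₀`, encoded by the
integral equation. -/
def P1Admissible (x₀ : ℝ) (x y : ℝ → ℝ) : Prop :=
  Measurable y ∧
  (∀ T : ℝ, 0 < T → ∃ C : ℝ, ∀ t ∈ Set.Icc (0:ℝ) T, |y t| ≤ C) ∧
  (∀ t : ℝ, 0 ≤ t → 0 < y t) ∧
  x 0 = x₀ ∧
  (∀ t : ℝ, 0 ≤ t → x t = x₀ + ∫ s in (0:ℝ)..t, (x s * (1 - x s) - y s * x s))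

open Set Topology

/-!
Since `log x + log y = log (x y) ≤ x y`, the integrand is dominated by the discounted yield
`e^{-δt} x y`. Along a trajectory `x y = x (1 - x) - x'`, so once `0 < x ≤ max x₀ 1` is known the
yield over any unit time interval is at most `max x₀ 1 + 1`, and the discounted yield is integrable
on `[0, ∞)`. The objective is then the difference of a convergent integral and a nondecreasing
one, hence it converges or tends to `-∞`.

The bounds on `x` come from comparison with the barrier `max x₀ 1` and with the subsolution
`x₀ e^{-(max x₀ 1 + C) t}`, where `C` bounds `y`. The state equation is written with an interval
integral, which is `0` for a non-integrable vector field, so local integrability of the vector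
field is not given: it is recovered from these bounds.
-/

section ImproperIntegral

variable {f g k : ℝ → ℝ}

theorem integrableOn_Ioi_of_intervalIntegral_le_summable {u : ℕ → ℝ}
    (hg : ∀ t, 0 ≤ t → 0 ≤ g t) (hg_int : ∀ n : ℕ, IntervalIntegrable g volume n (n + 1))
    (hu : Summable u) (hgu : ∀ n : ℕ, ∫ t in n..n + 1, g t ≤ u n) :
    IntegrableOn g (Ioi 0) := by
  have hg_int' : ∀ k : ℕ, IntervalIntegrable g volume k ((k + 1 : ℕ) : ℝ) := fun k => by
    simpa using hg_int k
  have hu_nonneg : ∀ n : ℕ, 0 ≤ u n := fun n =>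
    (intervalIntegral.integral_nonneg (by linarith) fun t ht => hg t ((n.cast_nonneg).trans ht.1)
      ).trans (hgu n)
  refine integrableOn_Ioi_of_intervalIntegral_norm_bounded (∑' n, u n) 0
    (fun N => (intervalIntegrable_iff_integrableOn_Ioc_of_le N.cast_nonneg).1
      (by simpa using IntervalIntegrable.trans_iterate fun k _ => hg_int' k))
    tendsto_natCast_atTop_atTop (Eventually.of_forall fun N => ?_)
  calc ∫ t in (0 : ℝ)..N, ‖g t‖ = ∫ t in (0 : ℝ)..N, g t :=
        intervalIntegral.integral_congr fun t ht => Real.norm_of_nonneg (hg t (by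
          rw [uIcc_of_le N.cast_nonneg] at ht; exact ht.1))
    _ = ∑ n ∈ Finset.range N, ∫ t in (n : ℝ)..n + 1, g t := by
        simpa using (intervalIntegral.sum_integral_adjacent_intervals fun k _ => hg_int' k).symm
    _ ≤ ∑ n ∈ Finset.range N, u n := Finset.sum_le_sum fun n _ => hgu n
    _ ≤ ∑' n, u n := hu.sum_le_tsum _ fun n _ => hu_nonneg n

theorem tendsto_intervalIntegral_atTop_of_not_integrableOn (hk : ∀ t, 0 ≤ t → 0 ≤ k t)
    (hk_int : ∀ T, 0 ≤ T → IntervalIntegrable k volume 0 T) (hki : ¬ IntegrableOn k (Ioi 0)) :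
    Tendsto (fun T => ∫ t in (0 : ℝ)..T, k t) atTop atTop := by
  rw [tendsto_atTop_atTop]
  intro b
  by_contra! hb
  refine hki (integrableOn_Ioi_of_intervalIntegral_norm_bounded b 0 (b := fun N : ℕ => (N : ℝ))
    (fun N => (intervalIntegrable_iff_integrableOn_Ioc_of_le N.cast_nonneg).1
      (hk_int N N.cast_nonneg)) tendsto_natCast_atTop_atTop (Eventually.of_forall fun N => ?_))
  obtain ⟨T, hNT, hT⟩ := hb N
  have hT0 : 0 ≤ T := N.cast_nonneg.trans hNT
  calc ∫ t in (0 : ℝ)..N, ‖k t‖ = ∫ t in (0 : ℝ)..N, k t :=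
        intervalIntegral.integral_congr fun t ht => Real.norm_of_nonneg (hk t (by
          rw [uIcc_of_le N.cast_nonneg] at ht; exact ht.1))
    _ ≤ ∫ t in (0 : ℝ)..T, k t :=
        intervalIntegral.integral_mono_interval le_rfl N.cast_nonneg hNT
          ((ae_restrict_iff' measurableSet_Ioc).2 (ae_of_all _ fun t ht => hk t ht.1.le))
          (hk_int T hT0)
    _ ≤ b := hT.le

theorem tendsto_intervalIntegral_or_atBot_of_le_integrableOn
    (hf : ∀ T, IntervalIntegrable f volume 0 T) (hg : IntegrableOn g (Ioi 0))
    (hfg : ∀ t, 0 ≤ t → f t ≤ g t) :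
    (∃ L, Tendsto (fun T => ∫ t in (0 : ℝ)..T, f t) atTop (𝓝 L)) ∨
      Tendsto (fun T => ∫ t in (0 : ℝ)..T, f t) atTop atBot := by
  by_cases hfi : IntegrableOn f (Ioi 0)
  · exact Or.inl ⟨_, intervalIntegral_tendsto_integral_Ioi 0 hfi tendsto_id⟩
  right
  have hg_int : ∀ T, 0 ≤ T → IntervalIntegrable g volume 0 T := fun T hT =>
    (intervalIntegrable_iff_integrableOn_Ioc_of_le hT).2 (hg.mono_set Ioc_subset_Ioi_self)
  have hgap : Tendsto (fun T => ∫ t in (0 : ℝ)..T, (g t - f t)) atTop atTop :=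
    tendsto_intervalIntegral_atTop_of_not_integrableOn (fun t ht => sub_nonneg.2 (hfg t ht))
      (fun T hT => (hg_int T hT).sub (hf T)) fun h => hfi (by simpa [Pi.sub_def] using hg.sub h)
  refine ((intervalIntegral_tendsto_integral_Ioi 0 hg tendsto_id).add_atBot
    (tendsto_neg_atTop_atBot.comp hgap)).congr' ?_
  filter_upwards [eventually_ge_atTop 0] with T hT
  simp [intervalIntegral.integral_sub (hg_int T hT) (hf T)]

end ImproperIntegral

theorem nonneg_of_forall_le_of_neg_on_Ioc {w : ℝ → ℝ} {a b : ℝ} (hw : ContinuousOn w (Icc a b))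
    (ha : 0 ≤ w a)
    (hstep : ∀ s ∈ Icc a b, ∀ t ∈ Icc a b, s ≤ t → (∀ r ∈ Ioc s t, w r < 0) → w s ≤ w t) :
    ∀ t ∈ Icc a b, 0 ≤ w t := by
  intro t ht
  by_contra! hwt
  set A := Icc a t ∩ w ⁻¹' Ici 0
  have hA_bdd : BddAbove A := ⟨t, fun s hs => hs.1.2⟩
  obtain ⟨⟨has, hst⟩, hws⟩ : sSup A ∈ A :=
    ((hw.mono (Icc_subset_Icc_right ht.2)).preimage_isClosed_of_isClosed isClosed_Icc
      isClosed_Ici).csSup_mem ⟨a, left_mem_Icc.2 ht.1, ha⟩ hA_bdd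
  have hneg : ∀ r ∈ Ioc (sSup A) t, w r < 0 := fun r hr =>
    not_le.1 fun hwr => hr.1.not_ge (le_csSup hA_bdd ⟨⟨has.trans hr.1.le, hr.2⟩, hwr⟩)
  have := hstep _ ⟨has, hst.trans ht.2⟩ t ht hst hneg
  exact hwt.not_ge (le_trans hws this)

section Primitive

variable {x h : ℝ → ℝ} {x₀ T : ℝ}

theorem sub_eq_intervalIntegral_of_eq_add (hx : ∀ t ∈ Icc 0 T, x t = x₀ + ∫ s in 0..t, h s)
    (hh : IntervalIntegrable h volume 0 T) {s t : ℝ} (hs : s ∈ Icc 0 T) (ht : t ∈ Icc 0 T) :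
    x t - x s = ∫ r in s..t, h r := by
  have hint : ∀ u ∈ Icc 0 T, IntervalIntegrable h volume 0 u := fun u hu =>
    hh.mono_set (uIcc_subset_uIcc left_mem_uIcc (Icc_subset_uIcc hu))
  rw [hx t ht, hx s hs, add_sub_add_left_eq_sub,
    intervalIntegral.integral_interval_sub_left (hint t ht) (hint s hs)]

theorem continuousOn_of_eq_add_intervalIntegral
    (hx : ∀ t ∈ Icc 0 T, x t = x₀ + ∫ s in 0..t, h s) (hh : IntervalIntegrable h volume 0 T) :
    ContinuousOn x (Icc 0 T) := by
  exact (continuousOn_const.add ((intervalIntegral.continuousOn_primitive_interval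
    ((intervalIntegrable_iff' (f := h)).1 hh)).mono Icc_subset_uIcc)).congr hx

theorem aemeasurable_of_eq_add_intervalIntegral
    (hx : ∀ t ∈ Icc 0 T, x t = x₀ + ∫ s in 0..t, h s) :
    AEMeasurable x (volume.restrict (Ioc 0 T)) := by
  set S := {t ∈ Icc 0 T | IntervalIntegrable h volume 0 t}
  have hS_bdd : BddAbove S := ⟨T, fun t ht => ht.1.2⟩
  have hcont : ContinuousOn x (Ioo 0 (sSup S)) := by
    intro t ht
    have hS : S.Nonempty := nonempty_iff_ne_empty.2 fun hS => by
      simp [hS] at ht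
    obtain ⟨t', ⟨ht', hi⟩, htt'⟩ := exists_lt_of_lt_csSup hS ht.2
    have := continuousOn_of_eq_add_intervalIntegral
      (fun s hs => hx s (Icc_subset_Icc_right ht'.2 hs)) hi
    exact (this.continuousAt (Icc_mem_nhds ht.1 htt')).continuousWithinAt
  -- past `sSup S` the integral in `hx` is `0`
  have hconst : ∀ t ∈ Ioc (sSup S) T, x t = x₀ := by
    intro t ht
    have ht0 : 0 ≤ t := (Real.sSup_nonneg fun s hs => hs.1.1).trans ht.1.le
    have hni : ¬ IntervalIntegrable h volume 0 t := fun hi =>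
      ht.1.not_ge (le_csSup hS_bdd ⟨⟨ht0, ht.2⟩, hi⟩)
    rw [hx t ⟨ht0, ht.2⟩, intervalIntegral.integral_undef hni, add_zero]
  have hIcc : AEMeasurable x (volume.restrict (Icc (sSup S) T)) := by
    rw [← Measure.restrict_congr_set Ioc_ae_eq_Icc]
    exact aemeasurable_const.congr
      ((ae_restrict_iff' measurableSet_Ioc).2 (ae_of_all _ fun t ht => (hconst t ht).symm))
  exact (aemeasurable_union_iff.2 ⟨hcont.aemeasurable measurableSet_Ioo, hIcc⟩).mono_set
    fun t ht => (lt_or_ge t (sSup S)).imp (fun h => ⟨ht.1, h⟩) (fun h => ⟨h, ht.2⟩)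

end Primitive

def logisticHarvest (x y : ℝ → ℝ) (t : ℝ) : ℝ := x t * (1 - x t) - y t * x t

section Logistic

variable {x y : ℝ → ℝ} {x₀ C T : ℝ}

theorem le_max_of_eq_add_integral_logisticHarvest
    (hx : ∀ t ∈ Icc 0 T, x t = x₀ + ∫ s in 0..t, logisticHarvest x y s)
    (hh : IntervalIntegrable (logisticHarvest x y) volume 0 T) (hy : ∀ t ∈ Icc 0 T, 0 ≤ y t) :
    ∀ t ∈ Icc 0 T, x t ≤ max x₀ 1 := by
  intro t ht
  have hx0 : x 0 = x₀ := by simpa using hx 0 ⟨le_rfl, ht.1.trans ht.2⟩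
  refine sub_nonneg.1 (nonneg_of_forall_le_of_neg_on_Ioc (w := fun t => max x₀ 1 - x t)
    (continuousOn_const.sub (continuousOn_of_eq_add_intervalIntegral hx hh))
    (by simp [hx0]) ?_ t ht)
  intro s hs r hr hsr hneg
  have hdecr : ∫ u in s..r, logisticHarvest x y u ≤ ∫ _ in s..r, (0 : ℝ) := by
    refine intervalIntegral.integral_mono_on_of_le_Ioo hsr
      (hh.mono_set (uIcc_subset_uIcc (Icc_subset_uIcc hs) (Icc_subset_uIcc hr)))
      intervalIntegrable_const fun u hu => ?_
    have hxu : max x₀ 1 < x u := sub_neg.1 (hneg u (Ioo_subset_Ioc_self hu))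
    have hyu := hy u ⟨hs.1.trans hu.1.le, hu.2.le.trans hr.2⟩
    have : 1 < x u := (le_max_right _ _).trans_lt hxu
    simp only [logisticHarvest]
    nlinarith
  have := sub_eq_intervalIntegral_of_eq_add hx hh hs hr
  simp only [intervalIntegral.integral_zero] at hdecr
  linarith

theorem exp_mul_le_of_eq_add_integral_logisticHarvest
    (hx : ∀ t ∈ Icc 0 T, x t = x₀ + ∫ s in 0..t, logisticHarvest x y s)
    (hh : IntervalIntegrable (logisticHarvest x y) volume 0 T) (hy : ∀ t ∈ Icc 0 T, 0 ≤ y t)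
    (hyC : ∀ t ∈ Icc 0 T, y t ≤ C) {b : ℝ} (hb : b ∈ Icc 0 T) (hpos : ∀ r ∈ Ico 0 b, 0 < x r) :
    x₀ * Real.exp (-(max x₀ 1 + C) * b) ≤ x b := by
  have hcont := continuousOn_of_eq_add_intervalIntegral hx hh
  have hxM := le_max_of_eq_add_integral_logisticHarvest hx hh hy
  have hx0 : x 0 = x₀ := by simpa using hx 0 ⟨le_rfl, hb.1.trans hb.2⟩
  set K := max x₀ 1 + C
  have hK : 0 ≤ K := by linarith [le_max_right x₀ 1, hy b hb, hyC b hb]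
  -- `c' = -K c ≤ logisticHarvest x y` wherever `0 < x < c`
  set c : ℝ → ℝ := fun t => x₀ * Real.exp (-K * t)
  have hc : ∀ t, HasDerivAt c (-K * c t) t := fun t => by
    simpa [c, mul_comm, mul_left_comm] using
      ((hasDerivAt_id t).const_mul (-K)).exp.const_mul x₀
  have hc' : ∀ s r, IntervalIntegrable (fun u => -K * c u) volume s r := fun s r =>
    (continuous_const.mul (continuous_iff_continuousAt.2 fun t => (hc t).continuousAt)
      ).intervalIntegrable s r
  have hsub : Icc 0 b ⊆ Icc 0 T := Icc_subset_Icc_right hb.2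
  refine sub_nonneg.1 (nonneg_of_forall_le_of_neg_on_Ioc (w := fun t => x t - c t)
    ((hcont.mono hsub).sub fun t _ => (hc t).continuousAt.continuousWithinAt) (by simp [c, hx0])
    (fun s hs r hr hsr hneg => ?_) b (right_mem_Icc.2 hb.1))
  have hcomp : ∫ u in s..r, -K * c u ≤ ∫ u in s..r, logisticHarvest x y u := by
    refine intervalIntegral.integral_mono_on_of_le_Ioo hsr (hc' s r)
      (hh.mono_set (uIcc_subset_uIcc (Icc_subset_uIcc (hsub hs)) (Icc_subset_uIcc (hsub hr))))
      fun u hu => ?_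
    have hu0 : u ∈ Icc 0 T := hsub ⟨hs.1.trans hu.1.le, hu.2.le.trans hr.2⟩
    have hxu := hpos u ⟨hu0.1, hu.2.trans_le hr.2⟩
    have hxcu : x u < c u := sub_neg.1 (hneg u (Ioo_subset_Ioc_self hu))
    have hyu := hy u hu0
    have hyCu := hyC u hu0
    have hxMu := hxM u hu0
    simp only [logisticHarvest]
    nlinarith [mul_le_mul_of_nonneg_left hxcu.le hK]
  rw [intervalIntegral.integral_eq_sub_of_hasDerivAt (fun u _ => hc u) (hc' s r)] at hcomp
  have := sub_eq_intervalIntegral_of_eq_add hx hh (hsub hs) (hsub hr)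
  linarith

theorem pos_of_eq_add_integral_logisticHarvest (hx₀ : 0 < x₀)
    (hx : ∀ t ∈ Icc 0 T, x t = x₀ + ∫ s in 0..t, logisticHarvest x y s)
    (hh : IntervalIntegrable (logisticHarvest x y) volume 0 T) (hy : ∀ t ∈ Icc 0 T, 0 ≤ y t)
    (hyC : ∀ t ∈ Icc 0 T, y t ≤ C) :
    ∀ t ∈ Icc 0 T, 0 < x t := by
  by_contra! hZ
  obtain ⟨t, ht, hxt⟩ := hZ
  set Z := Icc 0 T ∩ x ⁻¹' Iic 0
  have hZ_bdd : BddBelow Z := ⟨0, fun s hs => hs.1.1⟩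
  obtain ⟨ht₀, hxt₀⟩ : sInf Z ∈ Z :=
    ((continuousOn_of_eq_add_intervalIntegral hx hh).preimage_isClosed_of_isClosed isClosed_Icc
      isClosed_Iic).csInf_mem ⟨t, ht, hxt⟩ hZ_bdd
  have hpos : ∀ r ∈ Ico 0 (sInf Z), 0 < x r := fun r hr =>
    not_le.1 fun hxr => hr.2.not_ge (csInf_le hZ_bdd ⟨⟨hr.1, hr.2.le.trans ht₀.2⟩, hxr⟩)
  have := exp_mul_le_of_eq_add_integral_logisticHarvest hx hh hy hyC ht₀ hpos
  have : 0 < x₀ * Real.exp (-(max x₀ 1 + C) * sInf Z) := by positivity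
  linarith [show x (sInf Z) ≤ 0 from hxt₀]

theorem intervalIntegrable_logisticHarvest (hx₀ : 0 < x₀) (hT : 0 ≤ T) (hy_meas : Measurable y)
    (hy : ∀ t ∈ Icc 0 T, 0 ≤ y t) (hyC : ∀ t ∈ Icc 0 T, y t ≤ C)
    (hx : ∀ t ∈ Icc 0 T, x t = x₀ + ∫ s in 0..t, logisticHarvest x y s) :
    IntervalIntegrable (logisticHarvest x y) volume 0 T := by
  set M := max x₀ 1
  -- where the vector field is not integrable on `[0, t]`, the integral is `0` and `x t = x₀`
  have hbound : ∀ t ∈ Icc 0 T, 0 < x t ∧ x t ≤ M := by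
    intro t ht
    have hsub : Icc 0 t ⊆ Icc 0 T := Icc_subset_Icc_right ht.2
    by_cases hi : IntervalIntegrable (logisticHarvest x y) volume 0 t
    · have hxt : ∀ s ∈ Icc 0 t, x s = x₀ + ∫ r in 0..s, logisticHarvest x y r :=
        fun s hs => hx s (hsub hs)
      exact ⟨pos_of_eq_add_integral_logisticHarvest hx₀ hxt hi (fun s hs => hy s (hsub hs))
          (fun s hs => hyC s (hsub hs)) t (right_mem_Icc.2 ht.1),
        le_max_of_eq_add_integral_logisticHarvest hxt hi (fun s hs => hy s (hsub hs)) t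
          (right_mem_Icc.2 ht.1)⟩
    · rw [hx t ht, intervalIntegral.integral_undef hi, add_zero]
      exact ⟨hx₀, le_max_left _ _⟩
  have hx_meas := aemeasurable_of_eq_add_intervalIntegral hx
  rw [intervalIntegrable_iff_integrableOn_Ioc_of_le hT]
  refine Integrable.of_bound (by unfold logisticHarvest; fun_prop) (M * (1 + M + C))
    ((ae_restrict_iff' measurableSet_Ioc).2 (ae_of_all _ fun t ht => ?_))
  obtain ⟨hxt, hxM⟩ := hbound t (Ioc_subset_Icc_self ht)
  have hyt := hy t (Ioc_subset_Icc_self ht)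
  have hyCt := hyC t (Ioc_subset_Icc_self ht)
  rw [Real.norm_eq_abs, abs_le, logisticHarvest]
  constructor <;> nlinarith [mul_le_mul_of_nonneg_left hyCt hxt.le]

end Logistic

namespace P1Admissible

variable {x₀ T : ℝ} {x y : ℝ → ℝ}

theorem eq_add_integral_logisticHarvest (hadm : P1Admissible x₀ x y) :
    ∀ t ∈ Icc 0 T, x t = x₀ + ∫ s in 0..t, logisticHarvest x y s :=
  fun t ht => hadm.2.2.2.2 t ht.1

theorem control_pos (hadm : P1Admissible x₀ x y) {t : ℝ} (ht : 0 ≤ t) : 0 < y t :=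
  hadm.2.2.1 t ht

theorem exists_control_le (hadm : P1Admissible x₀ x y) (T : ℝ) :
    ∃ C, ∀ t ∈ Icc 0 T, y t ≤ C := by
  obtain ⟨C, hC⟩ := hadm.2.1 (max T 0 + 1) (by positivity)
  exact ⟨C, fun t ht => (le_abs_self _).trans
    (hC t ⟨ht.1, ht.2.trans (by linarith [le_max_left T 0])⟩)⟩

protected theorem intervalIntegrable_logisticHarvest (hadm : P1Admissible x₀ x y) (hx₀ : 0 < x₀)
    (hT : 0 ≤ T) : IntervalIntegrable (logisticHarvest x y) volume 0 T := by
  obtain ⟨C, hC⟩ := hadm.exists_control_le T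
  exact _root_.intervalIntegrable_logisticHarvest hx₀ hT hadm.1
    (fun t ht => (hadm.control_pos ht.1).le) hC hadm.eq_add_integral_logisticHarvest

theorem mem_Ioc (hadm : P1Admissible x₀ x y) (hx₀ : 0 < x₀) {t : ℝ} (ht : 0 ≤ t) :
    x t ∈ Ioc 0 (max x₀ 1) := by
  obtain ⟨C, hC⟩ := hadm.exists_control_le t
  have hx := hadm.eq_add_integral_logisticHarvest (T := t)
  have hh := hadm.intervalIntegrable_logisticHarvest hx₀ ht
  have hy : ∀ s ∈ Icc 0 t, 0 ≤ y s := fun s hs => (hadm.control_pos hs.1).le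
  exact ⟨pos_of_eq_add_integral_logisticHarvest hx₀ hx hh hy hC t (right_mem_Icc.2 ht),
    le_max_of_eq_add_integral_logisticHarvest hx hh hy t (right_mem_Icc.2 ht)⟩

theorem continuousOn (hadm : P1Admissible x₀ x y) (hx₀ : 0 < x₀) (hT : 0 ≤ T) :
    ContinuousOn x (Icc 0 T) :=
  continuousOn_of_eq_add_intervalIntegral hadm.eq_add_integral_logisticHarvest
    (hadm.intervalIntegrable_logisticHarvest hx₀ hT)

theorem intervalIntegrable_mul_one_sub (hadm : P1Admissible x₀ x y) (hx₀ : 0 < x₀)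
    (hT : 0 ≤ T) : IntervalIntegrable (fun t => x t * (1 - x t)) volume 0 T := by
  have hcont := hadm.continuousOn hx₀ hT
  rw [← uIcc_of_le hT] at hcont
  exact (hcont.mul (continuousOn_const.sub hcont)).intervalIntegrable

theorem intervalIntegrable_mul (hadm : P1Admissible x₀ x y) (hx₀ : 0 < x₀) (hT : 0 ≤ T) :
    IntervalIntegrable (fun t => x t * y t) volume 0 T := by
  convert (hadm.intervalIntegrable_mul_one_sub hx₀ hT).sub
    (hadm.intervalIntegrable_logisticHarvest hx₀ hT) using 1
  ext t
  simp only [logisticHarvest]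
  ring

theorem integral_mul_le (hadm : P1Admissible x₀ x y) (hx₀ : 0 < x₀) {a : ℝ} (ha : 0 ≤ a) :
    ∫ t in a..a + 1, x t * y t ≤ max x₀ 1 + 1 := by
  have hT : 0 ≤ a + 1 := by linarith
  have hsub : uIcc a (a + 1) ⊆ uIcc 0 (a + 1) :=
    uIcc_subset_uIcc (Icc_subset_uIcc ⟨ha, by linarith⟩) right_mem_uIcc
  have hq := (hadm.intervalIntegrable_mul_one_sub hx₀ hT).mono_set hsub
  have hh := (hadm.intervalIntegrable_logisticHarvest hx₀ hT).mono_set hsub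
  have hyield : ∫ t in a..a + 1, x t * y t
      = (∫ t in a..a + 1, x t * (1 - x t)) - (x (a + 1) - x a) := by
    rw [sub_eq_intervalIntegral_of_eq_add hadm.eq_add_integral_logisticHarvest
      (hadm.intervalIntegrable_logisticHarvest hx₀ hT) ⟨ha, by linarith⟩ ⟨hT, le_rfl⟩,
      ← intervalIntegral.integral_sub hq hh]
    congr 1
    ext t
    simp only [logisticHarvest]
    ring
  have hq_le : ∫ t in a..a + 1, x t * (1 - x t) ≤ ∫ _ in a..a + 1, (1 : ℝ) :=
    intervalIntegral.integral_mono_on (by linarith) hq intervalIntegrable_const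
      fun t _ => by nlinarith [sq_nonneg (x t - 1 / 2)]
  simp only [intervalIntegral.integral_const, add_sub_cancel_left, smul_eq_mul, mul_one]
    at hq_le
  linarith [(hadm.mem_Ioc hx₀ ha).2, (hadm.mem_Ioc hx₀ hT).1]

theorem intervalIntegrable_exp_mul_mul (hadm : P1Admissible x₀ x y) (hx₀ : 0 < x₀) (δ : ℝ)
    {a : ℝ} (ha : 0 ≤ a) :
    IntervalIntegrable (fun t => Real.exp (-δ * t) * (x t * y t)) volume a (a + 1) :=
  ((hadm.intervalIntegrable_mul hx₀ ha).symm.trans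
    (hadm.intervalIntegrable_mul hx₀ (by linarith))).continuousOn_mul (by fun_prop)

theorem integral_exp_mul_mul_le (hadm : P1Admissible x₀ x y) (hx₀ : 0 < x₀) {δ a : ℝ}
    (hδ : 0 ≤ δ) (ha : 0 ≤ a) :
    ∫ t in a..a + 1, Real.exp (-δ * t) * (x t * y t) ≤ (max x₀ 1 + 1) * Real.exp (-δ * a) := by
  have hxy := (hadm.intervalIntegrable_mul hx₀ ha).symm.trans
    (hadm.intervalIntegrable_mul hx₀ (T := a + 1) (by linarith))
  calc ∫ t in a..a + 1, Real.exp (-δ * t) * (x t * y t)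
      ≤ ∫ t in a..a + 1, Real.exp (-δ * a) * (x t * y t) := by
        refine intervalIntegral.integral_mono_on (by linarith)
          (hadm.intervalIntegrable_exp_mul_mul hx₀ δ ha) (hxy.const_mul _) fun t ht => ?_
        have ht0 : 0 ≤ t := ha.trans ht.1
        exact mul_le_mul_of_nonneg_right (Real.exp_le_exp.2 (by nlinarith [ht.1]))
          (mul_pos (hadm.mem_Ioc hx₀ ht0).1 (hadm.control_pos ht0)).le
    _ = Real.exp (-δ * a) * ∫ t in a..a + 1, x t * y t := intervalIntegral.integral_const_mul _ _
    _ ≤ (max x₀ 1 + 1) * Real.exp (-δ * a) := by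
        rw [mul_comm]
        exact mul_le_mul_of_nonneg_right (hadm.integral_mul_le hx₀ ha) (Real.exp_pos _).le

end P1Admissible

theorem log_add_log_le_mul {a b : ℝ} (ha : 0 < a) (hb : 0 < b) :
    Real.log a + Real.log b ≤ a * b := by
  rw [← Real.log_mul ha.ne' hb.ne']
  exact Real.log_le_self (mul_pos ha hb).le

/-- The improper objective integral of problem (P1) is well defined for every
admissible pair: `∫_0^T e^{−δt}(ln x + ln y) dt` has a limit as `T → ∞`, which is
either a finite real number or `−∞`. -/
theorem objective_integral_limit_exists (δ x₀ : ℝ) (hδ : 0 < δ) (hx₀ : 0 < x₀)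
    (x y : ℝ → ℝ) (hadm : P1Admissible x₀ x y)
    (hint : ∀ T : ℝ, IntervalIntegrable
      (fun t => Real.exp (-δ * t) * (Real.log (x t) + Real.log (y t))) volume 0 T) :
    (∃ L : ℝ, Tendsto
        (fun T : ℝ => ∫ t in (0:ℝ)..T, Real.exp (-δ * t) * (Real.log (x t) + Real.log (y t)))
        atTop (nhds L)) ∨
      Tendsto
        (fun T : ℝ => ∫ t in (0:ℝ)..T, Real.exp (-δ * t) * (Real.log (x t) + Real.log (y t)))
        atTop atBot := by
  have hsummable : Summable fun n : ℕ => (max x₀ 1 + 1) * Real.exp (-δ * n) := by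
    simpa [mul_comm] using (Real.summable_exp_nat_mul_iff.2 (neg_neg_of_pos hδ)).mul_left
      (max x₀ 1 + 1)
  have hyield : IntegrableOn (fun t => Real.exp (-δ * t) * (x t * y t)) (Ioi 0) :=
    integrableOn_Ioi_of_intervalIntegral_le_summable
      (fun t ht => mul_nonneg (Real.exp_pos _).le
        (mul_pos (hadm.mem_Ioc hx₀ ht).1 (hadm.control_pos ht)).le)
      (fun n => hadm.intervalIntegrable_exp_mul_mul hx₀ δ n.cast_nonneg) hsummable
      (fun n => hadm.integral_exp_mul_mul_le hx₀ hδ.le n.cast_nonneg)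
  refine tendsto_intervalIntegral_or_atBot_of_le_integrableOn hint hyield fun t ht => ?_
  exact mul_le_mul_of_nonneg_left
    (log_add_log_le_mul (hadm.mem_Ioc hx₀ ht).1 (hadm.control_pos ht)) (Real.exp_pos _).le
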